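/- arXiv:1603.05727 — 2 statements merged into one kernel-verified Lean document; each statement's English description precedes it below -/
import Mathlib

section
/- Let n ≥ 1 and let h solve h'' + ((n-1)/ρ)h' - h = 0 on (0,∞) with h(0)=1, h'(0)=0. Define j(ρ) = (2-n) ρ^{n-1} h'(ρ) h(ρ) + ρ^n (h(ρ)² - h'(ρ)²). Then j'(ρ) = 2 ρ^{n-1} h(ρ)² for all ρ > 0. -/
/-!
Differentiate `j` by the product rule and eliminate `h''` with the equation
`ρ h'' = ρ h - (n - 1) h'`: the terms in `h h'` and `h'²` cancel, leaving `2 ρ^{n-1} h²`.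
-/

theorem hasDerivAt_radial_energy {n : ℕ} (hn : 1 ≤ n) {f f' : ℝ → ℝ} {f'' ρ : ℝ} (hρ : ρ ≠ 0)
    (hf : HasDerivAt f (f' ρ) ρ) (hf' : HasDerivAt f' f'' ρ)
    (hode : f'' + ((n - 1 : ℝ) / ρ) * f' ρ - f ρ = 0) :
    HasDerivAt (fun r : ℝ => (2 - n : ℝ) * r ^ (n - 1) * f' r * f r + r ^ n * (f r ^ 2 - f' r ^ 2))
      (2 * ρ ^ (n - 1) * f ρ ^ 2) ρ := by
  obtain ⟨k, rfl⟩ : ∃ k, n = k + 1 := ⟨n - 1, (Nat.sub_add_cancel hn).symm⟩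
  simp only [Nat.add_sub_cancel, Nat.cast_succ, add_sub_cancel_right] at hode ⊢
  have hode' : ρ * f'' = ρ * f ρ - k * f' ρ := by
    field_simp at hode
    linear_combination hode
  -- the derivative of `r ^ k` carries the truncated exponent `k - 1`; multiplying by `ρ` removes it
  have hpow : ρ * (k * ρ ^ (k - 1)) = k * ρ ^ k := by
    rcases k with _ | k
    · simp
    · rw [Nat.add_sub_cancel, pow_succ]
      ring
  have hj := ((((hasDerivAt_pow k ρ).const_mul (2 - ((k : ℝ) + 1))).fun_mul hf').fun_mul hf).fun_add
    ((hasDerivAt_pow (k + 1) ρ).fun_mul ((hf.fun_pow 2).fun_sub (hf'.fun_pow 2)))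
  refine hj.congr_deriv (mul_left_cancel₀ hρ ?_)
  push_cast
  linear_combination (1 - k) * f ρ * f' ρ * hpow
    + ((1 - k) * ρ ^ k * f ρ - 2 * ρ ^ k * f' ρ * ρ) * hode'

theorem stmt_4_general (n : ℕ) (hn : 1 ≤ n) (h : ℝ → ℝ) (hsm : ContDiff ℝ 2 h)
    (hode : ∀ ρ : ℝ, 0 < ρ →
      deriv (deriv h) ρ + ((n - 1 : ℝ) / ρ) * deriv h ρ - h ρ = 0) :
    ∀ ρ : ℝ, 0 < ρ →
      deriv (fun ρ : ℝ =>
          (2 - n : ℝ) * ρ ^ (n - 1) * deriv h ρ * h ρ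
            + ρ ^ n * ((h ρ) ^ 2 - (deriv h ρ) ^ 2)) ρ
        = 2 * ρ ^ (n - 1) * (h ρ) ^ 2 := by
  intro ρ hρ
  exact (hasDerivAt_radial_energy hn hρ.ne' ((hsm.differentiable two_ne_zero) ρ).hasDerivAt
    (hsm.differentiable_deriv_two ρ).hasDerivAt (hode ρ hρ)).deriv

/-- With `h` solving `h'' + ((n-1)/ρ)h' - h = 0`, `h(0)=1`, `h'(0)=0`,
the function `j(ρ) = (2-n)ρ^{n-1}h'(ρ)h(ρ) + ρ^n (h(ρ)² - h'(ρ)²)` satisfies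
`j'(ρ) = 2 ρ^{n-1} h(ρ)²` for all `ρ > 0`. -/
theorem stmt_4 (n : ℕ) (hn : 1 ≤ n) (h : ℝ → ℝ) (hsm : ContDiff ℝ 2 h)
    (hode : ∀ ρ : ℝ, 0 < ρ →
      deriv (deriv h) ρ + ((n - 1 : ℝ) / ρ) * deriv h ρ - h ρ = 0)
    (h0 : h 0 = 1) (h0' : deriv h 0 = 0) :
    ∀ ρ : ℝ, 0 < ρ →
      deriv (fun ρ : ℝ =>
          (2 - n : ℝ) * ρ ^ (n - 1) * deriv h ρ * h ρ
            + ρ ^ n * ((h ρ) ^ 2 - (deriv h ρ) ^ 2)) ρ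
        = 2 * ρ ^ (n - 1) * (h ρ) ^ 2 :=
  stmt_4_general n hn h hsm hode
end

section
/- Let n ≥ 1 and let h solve h'' + ((n-1)/ρ)h' - h = 0 on (0,∞) with h(0)=1, h'(0)=0, and assume h > 0 on [0,∞). Then the function σ(ρ) = (1/n)(ρ h'(ρ)/h(ρ) - 1) is strictly increasing on (0,∞). -/
/-!
With `q = ρ h'/h` we have `σ = (q - 1)/n`, and the ODE for `h` turns into the Riccati equation
`ρ q' = F`, where `F = ρ² + (2 - n) q - q²`, so it suffices that `F > 0` on `(0, ∞)`.
Near `0`, `h'(ρ)/ρ → h''(0) = h(0)/n`, hence `F/ρ² → 2/n > 0`. At a zero of `F` we have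
`q' = 0`, so `F' = 2ρ + (2 - n - 2q) q' = 2ρ > 0`: `F` can never reach `0` from above.
-/

open Filter Set Topology

theorem pos_of_hasDerivAt_pos_at_zeros {f f' : ℝ → ℝ} {a : ℝ}
    (hf : ∀ x, a < x → HasDerivAt f (f' x) x)
    (hzero : ∀ x, a < x → f x = 0 → 0 < f' x)
    (hnear : ∀ᶠ x in 𝓝[>] a, 0 < f x) {x : ℝ} (hx : a < x) : 0 < f x := by
  by_contra! hfx
  obtain ⟨b, hfb, hab, hbx⟩ := (hnear.and (Ioo_mem_nhdsGT hx)).exists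
  have hcont : ContinuousOn f (Icc b x) := fun y hy =>
    (hf y (hab.trans_le hy.1)).continuousAt.continuousWithinAt
  set S := Icc b x ∩ f ⁻¹' Iic 0
  have hS : IsCompact S := isCompact_Icc.of_isClosed_subset
    (hcont.preimage_isClosed_of_isClosed isClosed_Icc isClosed_Iic) inter_subset_left
  have hx₀ : sInf S ∈ S := hS.sInf_mem ⟨x, ⟨hbx.le, le_rfl⟩, hfx⟩
  set x₀ := sInf S
  have hpos_before : ∀ y, b ≤ y → y < x₀ → 0 < f y := fun y hby hy => by
    by_contra! hfy
    exact (csInf_le hS.bddBelow ⟨⟨hby, hy.le.trans hx₀.1.2⟩, hfy⟩).not_gt hy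
  have hbx₀ : b < x₀ :=
    hx₀.1.1.lt_of_ne fun hb => (show f x₀ ≤ 0 from hx₀.2).not_gt (hb ▸ hfb)
  have hax₀ : a < x₀ := hab.trans hbx₀
  have hfx₀ := hf x₀ hax₀
  have hneg : ∀ᶠ y in 𝓝[<] x₀, f y < 0 := by
    rcases (show f x₀ ≤ 0 from hx₀.2).lt_or_eq with hlt | hzero₀
    · exact (hfx₀.continuousAt.eventually_lt continuousAt_const hlt).filter_mono
        nhdsWithin_le_nhds
    · have hslope := (hasDerivAt_iff_tendsto_slope.mp hfx₀).mono_left (nhdsLT_le_nhdsNE x₀)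
      filter_upwards [hslope.eventually (eventually_gt_nhds (hzero x₀ hax₀ hzero₀)),
        self_mem_nhdsWithin] with y hy hyx
      exact neg_of_slope_pos hyx hy hzero₀
  obtain ⟨y, hy, hby, hyx⟩ := (hneg.and (Ioo_mem_nhdsLT hbx₀)).exists
  exact (hpos_before y hby.le hyx).not_gt hy

noncomputable def radialLogDeriv (h : ℝ → ℝ) (ρ : ℝ) : ℝ := ρ * deriv h ρ / h ρ

noncomputable def riccatiRhs (n : ℕ) (h : ℝ → ℝ) (ρ : ℝ) : ℝ :=
  ρ ^ 2 + (2 - n) * radialLogDeriv h ρ - radialLogDeriv h ρ ^ 2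

def SolvesRadialODE (n : ℕ) (h : ℝ → ℝ) : Prop :=
  ∀ ρ : ℝ, 0 < ρ → deriv (deriv h) ρ + ((n - 1 : ℝ) / ρ) * deriv h ρ - h ρ = 0

section RadialODE

variable {n : ℕ} {h : ℝ → ℝ} {ρ : ℝ}

theorem hasDerivAt_radialLogDeriv (hd : DifferentiableAt ℝ h ρ)
    (hd' : DifferentiableAt ℝ (deriv h) ρ) (hρ : ρ ≠ 0) (hne : h ρ ≠ 0)
    (hode : deriv (deriv h) ρ + ((n - 1 : ℝ) / ρ) * deriv h ρ - h ρ = 0) :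
    HasDerivAt (radialLogDeriv h) (riccatiRhs n h ρ / ρ) ρ := by
  have hder := ((hasDerivAt_id ρ).mul hd'.hasDerivAt).div hd.hasDerivAt hne
  refine hder.congr_deriv ?_
  have h'' : deriv (deriv h) ρ = h ρ - (n - 1) / ρ * deriv h ρ := by linear_combination hode
  simp only [riccatiRhs, radialLogDeriv, Pi.mul_apply, id, h'']
  field_simp
  ring

theorem hasDerivAt_riccatiRhs (hd : DifferentiableAt ℝ h ρ)
    (hd' : DifferentiableAt ℝ (deriv h) ρ) (hρ : ρ ≠ 0) (hne : h ρ ≠ 0)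
    (hode : deriv (deriv h) ρ + ((n - 1 : ℝ) / ρ) * deriv h ρ - h ρ = 0) :
    HasDerivAt (riccatiRhs n h)
      (2 * ρ + (2 - n - 2 * radialLogDeriv h ρ) * (riccatiRhs n h ρ / ρ)) ρ := by
  have hq := hasDerivAt_radialLogDeriv hd hd' hρ hne hode
  have hder := ((hasDerivAt_pow 2 ρ).add (hq.const_mul (2 - n : ℝ))).sub (hq.pow 2)
  refine hder.congr_deriv ?_
  push_cast
  ring

theorem tendsto_deriv_div_nhdsGT_zero (hn : 0 < n) (hsm : ContDiff ℝ 2 h)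
    (hode : SolvesRadialODE n h) (h0' : deriv h 0 = 0) :
    Tendsto (fun ρ => deriv h ρ / ρ) (𝓝[>] 0) (𝓝 (h 0 / n)) := by
  have hslope : Tendsto (fun ρ => deriv h ρ / ρ) (𝓝[>] 0) (𝓝 (deriv (deriv h) 0)) := by
    simpa [h0', div_eq_inv_mul] using
      (hsm.differentiable_deriv_two 0).hasDerivAt.tendsto_slope_zero_right
  have hcont : Tendsto (deriv (deriv h)) (𝓝[>] 0) (𝓝 (deriv (deriv h) 0)) :=
    ((hsm.deriv' (n := 1)).continuous_deriv le_rfl).continuousWithinAt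
  have hode_lim : Tendsto (deriv (deriv h)) (𝓝[>] 0)
      (𝓝 (h 0 - (n - 1) * deriv (deriv h) 0)) := by
    refine ((hsm.continuous.tendsto 0).mono_left nhdsWithin_le_nhds).sub
      (hslope.const_mul _) |>.congr' ?_
    filter_upwards [self_mem_nhdsWithin] with ρ hρ
    linear_combination -(hode ρ hρ)
  have hn' : (n : ℝ) ≠ 0 := by positivity
  have hval := tendsto_nhds_unique hcont hode_lim
  rw [show h 0 / n = deriv (deriv h) 0 by field_simp; linarith]
  exact hslope

theorem tendsto_riccatiRhs_div_sq (hn : 0 < n) (hsm : ContDiff ℝ 2 h)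
    (hode : SolvesRadialODE n h) (h0' : deriv h 0 = 0) (hne0 : h 0 ≠ 0) :
    Tendsto (fun ρ => riccatiRhs n h ρ / ρ ^ 2) (𝓝[>] 0) (𝓝 (2 / n)) := by
  have hh : Tendsto h (𝓝[>] 0) (𝓝 (h 0)) := hsm.continuous.continuousWithinAt
  have hh' : Tendsto (deriv h) (𝓝[>] 0) (𝓝 0) := by
    simpa [h0'] using ((hsm.continuous_deriv one_le_two).tendsto 0).mono_left nhdsWithin_le_nhds
  have hlim := (tendsto_const_nhds (x := (1 : ℝ))).add
    (((tendsto_deriv_div_nhdsGT_zero hn hsm hode h0').div hh hne0).const_mul (2 - n : ℝ))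
    |>.sub ((hh'.div hh hne0).pow 2)
  have hn' : (n : ℝ) ≠ 0 := by positivity
  convert hlim.congr' ?_ using 2
  · field_simp
    ring
  · filter_upwards [self_mem_nhdsWithin] with ρ hρ
    have hρ' : ρ ≠ 0 := ne_of_gt hρ
    simp only [riccatiRhs, radialLogDeriv, Pi.div_apply]
    field_simp

theorem riccatiRhs_pos (hn : 0 < n) (hsm : ContDiff ℝ 2 h)
    (hode : SolvesRadialODE n h) (h0' : deriv h 0 = 0)
    (hne : ∀ ρ : ℝ, 0 ≤ ρ → h ρ ≠ 0) (hρ : 0 < ρ) :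
    0 < riccatiRhs n h ρ := by
  refine pos_of_hasDerivAt_pos_at_zeros (fun x hx => hasDerivAt_riccatiRhs
    (hsm.differentiable two_ne_zero x) (hsm.differentiable_deriv_two x) hx.ne' (hne x hx.le)
    (hode x hx)) (fun x hx hzero => ?_) ?_ hρ
  · rw [hzero, zero_div, mul_zero, add_zero]
    positivity
  · have hlim := (tendsto_riccatiRhs_div_sq hn hsm hode h0' (hne 0 le_rfl)).eventually
      (eventually_gt_nhds (by positivity : (0 : ℝ) < 2 / n))
    filter_upwards [hlim, self_mem_nhdsWithin] with x hx hx0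
    exact (div_pos_iff_of_pos_right (pow_pos hx0 2)).mp hx

theorem strictMonoOn_radialLogDeriv (hn : 0 < n) (hsm : ContDiff ℝ 2 h)
    (hode : SolvesRadialODE n h) (h0' : deriv h 0 = 0)
    (hne : ∀ ρ : ℝ, 0 ≤ ρ → h ρ ≠ 0) :
    StrictMonoOn (radialLogDeriv h) (Ioi 0) := by
  have hder : ∀ x ∈ Ioi (0 : ℝ), HasDerivAt (radialLogDeriv h) (riccatiRhs n h x / x) x :=
    fun x hx => hasDerivAt_radialLogDeriv (hsm.differentiable two_ne_zero x)
      (hsm.differentiable_deriv_two x) (ne_of_gt hx) (hne x (le_of_lt hx)) (hode x hx)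
  refine strictMonoOn_of_hasDerivWithinAt_pos (f' := fun x => riccatiRhs n h x / x) (convex_Ioi 0)
    (fun x hx => (hder x hx).continuousAt.continuousWithinAt) ?_ ?_ <;> rw [interior_Ioi]
  · exact fun x hx => (hder x hx).hasDerivWithinAt
  · exact fun x hx => div_pos (riccatiRhs_pos hn hsm hode h0' hne hx) hx

end RadialODE

theorem stmt_5_general (n : ℕ) (hn : 1 ≤ n) (h : ℝ → ℝ) (hsm : ContDiff ℝ 2 h)
    (hode : ∀ ρ : ℝ, 0 < ρ →
      deriv (deriv h) ρ + ((n - 1 : ℝ) / ρ) * deriv h ρ - h ρ = 0)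
    (h0' : deriv h 0 = 0)
    (hpos : ∀ ρ : ℝ, 0 ≤ ρ → 0 < h ρ) :
    StrictMonoOn (fun ρ : ℝ => (1 / (n : ℝ)) * (ρ * deriv h ρ / h ρ - 1))
      (Set.Ioi (0 : ℝ)) := by
  have hq := strictMonoOn_radialLogDeriv hn hsm hode h0' fun ρ hρ => (hpos ρ hρ).ne'
  intro x hx y hy hxy
  exact mul_lt_mul_of_pos_left (sub_lt_sub_right (hq hx hy hxy) 1) (by positivity)

/-- With `h` solving `h'' + ((n-1)/ρ)h' - h = 0`, `h(0)=1`, `h'(0)=0`,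
and `h > 0` on `[0,∞)`, the function `σ(ρ) = (1/n)(ρ h'(ρ)/h(ρ) - 1)` is strictly
increasing on `(0,∞)`. -/
theorem stmt_5 (n : ℕ) (hn : 1 ≤ n) (h : ℝ → ℝ) (hsm : ContDiff ℝ 2 h)
    (hode : ∀ ρ : ℝ, 0 < ρ →
      deriv (deriv h) ρ + ((n - 1 : ℝ) / ρ) * deriv h ρ - h ρ = 0)
    (h0 : h 0 = 1) (h0' : deriv h 0 = 0)
    (hpos : ∀ ρ : ℝ, 0 ≤ ρ → 0 < h ρ) :
    StrictMonoOn (fun ρ : ℝ => (1 / (n : ℝ)) * (ρ * deriv h ρ / h ρ - 1))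
      (Set.Ioi (0 : ℝ)) :=
  stmt_5_general n hn h hsm hode h0' hpos
end
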